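/- Let μ be a tail generating measure and let C, C' be bivariate copulas admitting tail dependence functions. If there exists ε > 0 such that C(u,v) ≤ C'(u,v) for all (u,v) ∈ (0,ε)² (i.e. C' is more concordant in the tail than C), then λ_μ(C) ≤ λ_μ(C'). -/

import Mathlib

open MeasureTheory Filter Set

/-- A bivariate copula: `C : [0,1]² → [0,1]` with the grounded/marginal conditions and
the 2-increasing property. -/
def IsCopula (C : ℝ → ℝ → ℝ) : Prop :=
  (∀ u ∈ Icc (0:ℝ) 1, ∀ v ∈ Icc (0:ℝ) 1, C u v ∈ Icc (0:ℝ) 1) ∧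
  (∀ u ∈ Icc (0:ℝ) 1, C u 0 = 0 ∧ C 0 u = 0 ∧ C u 1 = u ∧ C 1 u = u) ∧
  (∀ u u' v v' : ℝ, u ∈ Icc (0:ℝ) 1 → u' ∈ Icc (0:ℝ) 1 →
    v ∈ Icc (0:ℝ) 1 → v' ∈ Icc (0:ℝ) 1 → u ≤ u' → v ≤ v' →
    0 ≤ C u' v' - C u' v - C u v' + C u v)

/-- `Λ` is the tail dependence function of `C`:
`Λ(u,v) = lim_{p↓0} C(pu,pv)/p` for every `(u,v) ∈ [0,∞)²`. -/
def HasTDF (C Λ : ℝ → ℝ → ℝ) : Prop :=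
  ∀ u v : ℝ, 0 ≤ u → 0 ≤ v →
    Tendsto (fun p : ℝ => C (p * u) (p * v) / p)
      (nhdsWithin (0:ℝ) (Ioi 0)) (nhds (Λ u v))

/-- A tail generating measure: a Borel probability measure on `[0,1]²` whose mass is not
concentrated on `{u = 0} ∪ {v = 0}`. -/
def IsTailGenMeasure (μ : Measure (ℝ × ℝ)) : Prop :=
  IsProbabilityMeasure μ ∧
  μ ((Icc (0:ℝ) 1 ×ˢ Icc (0:ℝ) 1)ᶜ) = 0 ∧
  μ {q : ℝ × ℝ | q.1 = 0 ∨ q.2 = 0} < 1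

/-- The μ-tail dependence measure: `λ_μ = (∫ Λ dμ) / (∫ min dμ)`, applied to
the tail dependence function `Λ` of the copula. -/
noncomputable def tdm (Λ : ℝ → ℝ → ℝ) (μ : Measure (ℝ × ℝ)) : ℝ :=
  (∫ q, Λ q.1 q.2 ∂μ) / (∫ q : ℝ × ℝ, min q.1 q.2 ∂μ)

/-! The tail dependence functions inherit from the copulas vanishing on the axes and the
Lipschitz bound `|Λ u' v' - Λ u v| ≤ |u' - u| + |v' - v|`; the latter makes them continuous,
hence `μ`-integrable on the unit square. Off the axes, `Λ u v ≤ Λ' u v` because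
`C (p u) (p v) ≤ C' (p u) (p v)` once `p u, p v < ε`. Integrating gives the numerators in order,
and the common denominator `∫ min q.1 q.2 ∂μ` is nonnegative. -/

open Topology

namespace IsCopula

variable {C : ℝ → ℝ → ℝ} {u u' v v' : ℝ}

theorem abs_sub_le_fst (hC : IsCopula C) (hu : u ∈ Icc (0:ℝ) 1) (hu' : u' ∈ Icc (0:ℝ) 1)
    (hv : v ∈ Icc (0:ℝ) 1) : |C u' v - C u v| ≤ |u' - u| := by
  wlog h : u ≤ u' generalizing u u'
  · rw [abs_sub_comm, abs_sub_comm u']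
    exact this hu' hu (le_of_not_ge h)
  obtain ⟨-, hbd, hinc⟩ := hC
  have h0 : (0:ℝ) ∈ Icc (0:ℝ) 1 := ⟨le_rfl, zero_le_one⟩
  have h1 : (1:ℝ) ∈ Icc (0:ℝ) 1 := ⟨zero_le_one, le_rfl⟩
  -- 2-increasingness on `[u, u'] × [0, v]` and on `[u, u'] × [v, 1]`
  have hmono := hinc u u' 0 v hu hu' h0 hv h hv.1
  have hlip := hinc u u' v 1 hu hu' hv h1 h hv.2
  rw [(hbd u hu).1, (hbd u' hu').1] at hmono
  rw [(hbd u hu).2.2.1, (hbd u' hu').2.2.1] at hlip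
  rw [abs_of_nonneg (by linarith), abs_of_nonneg (by linarith)]
  linarith

theorem abs_sub_le_snd (hC : IsCopula C) (hu : u ∈ Icc (0:ℝ) 1)
    (hv : v ∈ Icc (0:ℝ) 1) (hv' : v' ∈ Icc (0:ℝ) 1) : |C u v' - C u v| ≤ |v' - v| := by
  wlog h : v ≤ v' generalizing v v'
  · rw [abs_sub_comm, abs_sub_comm v']
    exact this hv' hv (le_of_not_ge h)
  obtain ⟨-, hbd, hinc⟩ := hC
  have h0 : (0:ℝ) ∈ Icc (0:ℝ) 1 := ⟨le_rfl, zero_le_one⟩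
  have h1 : (1:ℝ) ∈ Icc (0:ℝ) 1 := ⟨zero_le_one, le_rfl⟩
  have hmono := hinc 0 u v v' h0 hu hv hv' hu.1 h
  have hlip := hinc u 1 v v' hu h1 hv hv' hu.2 h
  rw [(hbd v hv).2.1, (hbd v' hv').2.1] at hmono
  rw [(hbd v hv).2.2.2, (hbd v' hv').2.2.2] at hlip
  rw [abs_of_nonneg (by linarith), abs_of_nonneg (by linarith)]
  linarith

theorem abs_sub_le (hC : IsCopula C) (hu : u ∈ Icc (0:ℝ) 1) (hu' : u' ∈ Icc (0:ℝ) 1)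
    (hv : v ∈ Icc (0:ℝ) 1) (hv' : v' ∈ Icc (0:ℝ) 1) :
    |C u' v' - C u v| ≤ |u' - u| + |v' - v| :=
  calc |C u' v' - C u v| ≤ |C u' v' - C u v'| + |C u v' - C u v| := _root_.abs_sub_le _ _ _
    _ ≤ |u' - u| + |v' - v| :=
      add_le_add (hC.abs_sub_le_fst hu hu' hv') (hC.abs_sub_le_snd hu hv hv')

end IsCopula

theorem eventually_nhdsGT_zero_mul_lt (u : ℝ) {ε : ℝ} (hε : 0 < ε) :
    ∀ᶠ p in 𝓝[>] (0:ℝ), p * u < ε := by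
  have : Tendsto (fun p : ℝ => p * u) (𝓝[>] 0) (𝓝 0) := by
    simpa using tendsto_nhdsWithin_of_tendsto_nhds
      ((continuous_mul_const u).tendsto (0:ℝ))
  exact this.eventually_lt_const hε

theorem eventually_nhdsGT_zero_mul_mem_Icc {u : ℝ} (hu : 0 ≤ u) :
    ∀ᶠ p in 𝓝[>] (0:ℝ), p * u ∈ Icc (0:ℝ) 1 := by
  filter_upwards [self_mem_nhdsWithin, eventually_nhdsGT_zero_mul_lt u one_pos] with p hp hpu
  exact ⟨mul_nonneg (le_of_lt hp) hu, hpu.le⟩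

namespace HasTDF

variable {C C' Λ Λ' : ℝ → ℝ → ℝ} {u u' v v' : ℝ}

theorem apply_zero_left (hC : IsCopula C) (hΛ : HasTDF C Λ) (hv : 0 ≤ v) : Λ 0 v = 0 := by
  refine tendsto_nhds_unique (hΛ 0 v le_rfl hv) (tendsto_const_nhds.congr' ?_)
  filter_upwards [eventually_nhdsGT_zero_mul_mem_Icc hv] with p hpv
  rw [mul_zero, (hC.2.1 _ hpv).2.1, zero_div]

theorem apply_zero_right (hC : IsCopula C) (hΛ : HasTDF C Λ) (hu : 0 ≤ u) : Λ u 0 = 0 := by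
  refine tendsto_nhds_unique (hΛ u 0 hu le_rfl) (tendsto_const_nhds.congr' ?_)
  filter_upwards [eventually_nhdsGT_zero_mul_mem_Icc hu] with p hpu
  rw [mul_zero, (hC.2.1 _ hpu).1, zero_div]

theorem abs_sub_le (hC : IsCopula C) (hΛ : HasTDF C Λ) (hu : 0 ≤ u) (hu' : 0 ≤ u')
    (hv : 0 ≤ v) (hv' : 0 ≤ v') : |Λ u' v' - Λ u v| ≤ |u' - u| + |v' - v| := by
  refine le_of_tendsto (((hΛ u' v' hu' hv').sub (hΛ u v hu hv)).abs) ?_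
  filter_upwards [self_mem_nhdsWithin, eventually_nhdsGT_zero_mul_mem_Icc hu,
    eventually_nhdsGT_zero_mul_mem_Icc hu', eventually_nhdsGT_zero_mul_mem_Icc hv,
    eventually_nhdsGT_zero_mul_mem_Icc hv'] with p (hp : 0 < p) hpu hpu' hpv hpv'
  rw [div_sub_div_same, abs_div, abs_of_pos hp, div_le_iff₀ hp]
  calc |C (p * u') (p * v') - C (p * u) (p * v)|
      ≤ |p * u' - p * u| + |p * v' - p * v| := hC.abs_sub_le hpu hpu' hpv hpv'
    _ = (|u' - u| + |v' - v|) * p := by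
      rw [← mul_sub, ← mul_sub, abs_mul, abs_mul, abs_of_pos hp]; ring

theorem lipschitzOnWith (hC : IsCopula C) (hΛ : HasTDF C Λ) :
    LipschitzOnWith 2 (fun q : ℝ × ℝ => Λ q.1 q.2) (Ici 0 ×ˢ Ici 0) := by
  refine LipschitzOnWith.of_dist_le_mul fun q hq r hr => ?_
  have h1 : dist q.1 r.1 ≤ dist q r := by
    rw [Prod.dist_eq]; exact le_max_left _ _
  have h2 : dist q.2 r.2 ≤ dist q r := by
    rw [Prod.dist_eq]; exact le_max_right _ _
  rw [Real.dist_eq] at h1 h2 ⊢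
  have := hΛ.abs_sub_le hC hr.1 hq.1 hr.2 hq.2
  push_cast
  linarith

theorem integrable (hC : IsCopula C) (hΛ : HasTDF C Λ) {μ : Measure (ℝ × ℝ)}
    [IsFiniteMeasure μ] (hμ : ∀ᵐ q ∂μ, q ∈ Icc (0:ℝ) 1 ×ˢ Icc (0:ℝ) 1) :
    Integrable (fun q : ℝ × ℝ => Λ q.1 q.2) μ := by
  have hcont : ContinuousOn (fun q : ℝ × ℝ => Λ q.1 q.2) (Icc (0:ℝ) 1 ×ˢ Icc (0:ℝ) 1) :=
    ((hΛ.lipschitzOnWith hC).mono (prod_mono Icc_subset_Ici_self Icc_subset_Ici_self)).continuousOn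
  have hmeas : AEStronglyMeasurable (fun q : ℝ × ℝ => Λ q.1 q.2) μ := by
    rw [← Measure.restrict_eq_self_of_ae_mem hμ]
    exact hcont.aestronglyMeasurable (measurableSet_Icc.prod measurableSet_Icc)
  refine Integrable.of_bound hmeas 1 ?_
  filter_upwards [hμ] with q hq
  have := hΛ.abs_sub_le hC le_rfl hq.1.1 hq.2.1 hq.2.1
  rw [hΛ.apply_zero_left hC hq.2.1, sub_zero, sub_zero, sub_self, abs_zero, add_zero,
    abs_of_nonneg hq.1.1] at this
  exact this.trans hq.1.2

theorem le_of_tail_le (hC : IsCopula C) (hC' : IsCopula C') (hΛ : HasTDF C Λ)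
    (hΛ' : HasTDF C' Λ') {ε : ℝ} (hε : 0 < ε)
    (hle : ∀ u v : ℝ, u ∈ Ioo (0:ℝ) ε → v ∈ Ioo (0:ℝ) ε → C u v ≤ C' u v)
    (hu : 0 ≤ u) (hv : 0 ≤ v) : Λ u v ≤ Λ' u v := by
  rcases hu.eq_or_lt with rfl | hu
  · rw [hΛ.apply_zero_left hC hv, hΛ'.apply_zero_left hC' hv]
  rcases hv.eq_or_lt with rfl | hv
  · rw [hΛ.apply_zero_right hC hu.le, hΛ'.apply_zero_right hC' hu.le]
  refine le_of_tendsto_of_tendsto (hΛ u v hu.le hv.le) (hΛ' u v hu.le hv.le) ?_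
  filter_upwards [self_mem_nhdsWithin, eventually_nhdsGT_zero_mul_lt u hε,
    eventually_nhdsGT_zero_mul_lt v hε] with p (hp : 0 < p) hpu hpv
  exact div_le_div_of_nonneg_right
    (hle _ _ ⟨mul_pos hp hu, hpu⟩ ⟨mul_pos hp hv, hpv⟩) hp.le

end HasTDF

theorem tdm_monotone_tail_concordance (C C' Λ Λ' : ℝ → ℝ → ℝ)
    (hC : IsCopula C) (hC' : IsCopula C')
    (hΛ : HasTDF C Λ) (hΛ' : HasTDF C' Λ')
    (μ : Measure (ℝ × ℝ)) (hμ : IsTailGenMeasure μ)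
    (hconc : ∃ ε > 0, ∀ u v : ℝ, u ∈ Ioo (0:ℝ) ε → v ∈ Ioo (0:ℝ) ε → C u v ≤ C' u v) :
    tdm Λ μ ≤ tdm Λ' μ := by
  obtain ⟨hprob, hsquare, -⟩ := hμ
  obtain ⟨ε, hε, hle⟩ := hconc
  have hsq : ∀ᵐ q ∂μ, q ∈ Icc (0:ℝ) 1 ×ˢ Icc (0:ℝ) 1 := ae_iff.2 hsquare
  refine div_le_div_of_nonneg_right ?_ (integral_nonneg_of_ae ?_)
  · refine integral_mono_ae (hΛ.integrable hC hsq) (hΛ'.integrable hC' hsq) ?_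
    filter_upwards [hsq] with q hq
    exact hΛ.le_of_tail_le hC hC' hΛ' hε hle hq.1.1 hq.2.1
  · filter_upwards [hsq] with q hq
    exact le_min hq.1.1 hq.2.1
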